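/- Let α = (0110 1100 1010 0000) ∈ ℤ₂¹⁶ and ξ = (α, α, α, αᶜ) ∈ ℤ₂⁶⁴ with αᶜ = 1¹⁶ + α. Then ξ·RM(1,6) is a doubly even subcode of RM(4,6); that is, every element of ξ·RM(1,6) lies in RM(1,6)^⊥ and has weight divisible by 4. -/

import Mathlib

def wt {n : ℕ} (v : Fin n → ZMod 2) : ℕ :=
  (Finset.univ.filter fun i => v i ≠ 0).card

def g1 : Fin 16 → ZMod 2 := fun _ => 1
def g2 : Fin 16 → ZMod 2 := fun i => if i.val < 8 then 1 else 0
def g3 : Fin 16 → ZMod 2 := fun i => if i.val % 8 < 4 then 1 else 0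
def g4 : Fin 16 → ZMod 2 := fun i => if i.val % 4 < 2 then 1 else 0
def g5 : Fin 16 → ZMod 2 := fun i => if i.val % 2 = 0 then 1 else 0

/-- The first-order Reed-Muller code RM(1,4) of length 16. -/
def RM14 : Submodule (ZMod 2) (Fin 16 → ZMod 2) :=
  Submodule.span (ZMod 2) {g1, g2, g3, g4, g5}

/-- Four copies of a length-16 word, concatenated. -/
def quad (a : Fin 16 → ZMod 2) : Fin 64 → ZMod 2 :=
  fun i => a ⟨i.val % 16, Nat.mod_lt _ (by norm_num)⟩

def γ6 : Fin 64 → ZMod 2 := fun i => if i.val / 16 = 1 ∨ i.val / 16 = 3 then 1 else 0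
def γ7 : Fin 64 → ZMod 2 := fun i => if 32 ≤ i.val then 1 else 0

/-- The first-order Reed-Muller code RM(1,6) of length 64. -/
def RM16 : Submodule (ZMod 2) (Fin 64 → ZMod 2) :=
  Submodule.span (ZMod 2) ({v | ∃ a ∈ RM14, v = quad a} ∪ {γ6, γ7})

/-- The dual of a binary code with respect to the standard bilinear form. -/
def dual {n : ℕ} (C : Submodule (ZMod 2) (Fin n → ZMod 2)) :
    Set (Fin n → ZMod 2) :=
  {v | ∀ w ∈ C, ∑ i, v i * w i = 0}

/-- Concatenation of four length-16 words into a length-64 word. -/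
def concat4 (a b c d : Fin 16 → ZMod 2) : Fin 64 → ZMod 2 := fun i =>
  if h : i.val < 16 then a ⟨i.val, h⟩
  else if h' : i.val < 32 then b ⟨i.val - 16, by omega⟩
  else if h'' : i.val < 48 then c ⟨i.val - 32, by omega⟩
  else d ⟨i.val - 48, by omega⟩

def α0 : Fin 16 → ZMod 2 := ![0,1,1,0, 1,1,0,0, 1,0,1,0, 0,0,0,0]

def ξ0 : Fin 64 → ZMod 2 := concat4 α0 α0 α0 ((fun _ => 1) + α0)

/-! The words `β ∈ C` with `ξ * β ∈ C^⊥` and `4 ∣ wt (ξ * β)` are closed under addition, so it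
suffices to check a generating set of `C`. Indeed, since `ξ` is a 0/1 word, `(ξ * x) ⬝ᵥ (ξ * y) = (ξ * x) ⬝ᵥ y`,
which vanishes when `ξ * x ∈ C^⊥` and `y ∈ C`; and two orthogonal doubly even words have a doubly
even sum, because `wt (u + v) = wt u + wt v - 2 wt (u * v)` and `wt (u * v) ≡ u ⬝ᵥ v (mod 2)`.
For `ξ = ξ0` and `C = RM(1,6)` it remains to check the seven standard generators, by computation. -/

open Matrix

section BinaryWeight

variable {n : ℕ}

theorem wt_eq_sum_val (v : Fin n → ZMod 2) : wt v = ∑ i, (v i).val := by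
  rw [wt, Finset.card_filter]
  refine Finset.sum_congr rfl fun i _ => ?_
  generalize v i = a
  revert a
  decide

theorem dotProduct_eq_wt_mul (u v : Fin n → ZMod 2) : u ⬝ᵥ v = (wt (u * v) : ZMod 2) := by
  simp only [wt_eq_sum_val, Nat.cast_sum, ZMod.natCast_zmod_val]
  rfl

theorem wt_add_add_two_mul_wt_mul (u v : Fin n → ZMod 2) :
    wt (u + v) + 2 * wt (u * v) = wt u + wt v := by
  simp only [wt_eq_sum_val, Finset.mul_sum, ← Finset.sum_add_distrib]
  refine Finset.sum_congr rfl fun i _ => ?_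
  simp only [Pi.add_apply, Pi.mul_apply]
  generalize u i = a; generalize v i = b
  revert a b
  decide

theorem wt_add_mod_four {u v : Fin n → ZMod 2} (huv : u ⬝ᵥ v = 0)
    (hu : wt u % 4 = 0) (hv : wt v % 4 = 0) : wt (u + v) % 4 = 0 := by
  obtain ⟨k, hk⟩ : 2 ∣ wt (u * v) := by
    rwa [dotProduct_eq_wt_mul, ZMod.natCast_eq_zero_iff] at huv
  have := wt_add_add_two_mul_wt_mul u v
  omega

theorem mem_dual_span_iff {s : Set (Fin n → ZMod 2)} {v : Fin n → ZMod 2} :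
    v ∈ dual (Submodule.span (ZMod 2) s) ↔ ∀ w ∈ s, v ⬝ᵥ w = 0 := by
  refine ⟨fun h w hw => h w (Submodule.subset_span hw), fun h => ?_⟩
  have : Submodule.span (ZMod 2) s ≤ LinearMap.ker (dotProductBilin (ZMod 2) (ZMod 2) v) :=
    Submodule.span_le.mpr h
  exact fun w hw => this hw

theorem mul_dotProduct_mul_self {ξ : Fin n → ZMod 2} (x y : Fin n → ZMod 2) :
    (ξ * x) ⬝ᵥ (ξ * y) = (ξ * x) ⬝ᵥ y := by
  refine Finset.sum_congr rfl fun i _ => ?_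
  simp only [Pi.mul_apply]
  generalize ξ i = a; generalize x i = b; generalize y i = c
  revert a b c
  decide

theorem forall_mul_mem_dual_span_of_generators (ξ : Fin n → ZMod 2) {s : Set (Fin n → ZMod 2)}
    (hs : ∀ g ∈ s, ξ * g ∈ dual (Submodule.span (ZMod 2) s) ∧ wt (ξ * g) % 4 = 0) :
    ∀ β ∈ Submodule.span (ZMod 2) s,
      ξ * β ∈ dual (Submodule.span (ZMod 2) s) ∧ wt (ξ * β) % 4 = 0 := by
  intro β hβ
  induction hβ using Submodule.span_induction with
  | mem g hg => exact hs g hg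
  | zero => simp [dual, wt]
  | add x y _ hy ihx ihy =>
    simp only [mem_dual_span_iff, mul_add, add_dotProduct] at ihx ihy ⊢
    refine ⟨fun w hw => by rw [ihx.1 w hw, ihy.1 w hw, add_zero], wt_add_mod_four ?_ ihx.2 ihy.2⟩
    rw [mul_dotProduct_mul_self]
    exact (mem_dual_span_iff.mpr ihx.1) y hy
  | smul c x _ ihx =>
    obtain rfl | rfl : c = 0 ∨ c = 1 := by revert c; decide
    · simp [dual, wt]
    · simpa using ihx

end BinaryWeight

def quadₗ : (Fin 16 → ZMod 2) →ₗ[ZMod 2] Fin 64 → ZMod 2 :=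
  LinearMap.funLeft (ZMod 2) (ZMod 2) fun i => ⟨i.val % 16, Nat.mod_lt _ (by norm_num)⟩

def rm16Gen : Fin 7 → Fin 64 → ZMod 2 := ![quad g1, quad g2, quad g3, quad g4, quad g5, γ6, γ7]

theorem RM16_eq_span_range_rm16Gen : RM16 = Submodule.span (ZMod 2) (Set.range rm16Gen) := by
  have hquad : {v | ∃ a ∈ RM14, v = quad a} = RM14.map quadₗ := by
    ext v
    simp only [Set.mem_ofPred_eq, SetLike.mem_coe, Submodule.mem_map, eq_comm]
    rfl
  have hrange : Set.range rm16Gen = quadₗ '' {g1, g2, g3, g4, g5} ∪ {γ6, γ7} := by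
    simp only [rm16Gen, range_cons, range_empty, Set.image_insert_eq,
      Set.image_singleton, Set.union_empty, Set.singleton_union, Set.insert_union]
    rfl
  rw [RM16, hquad, hrange, Submodule.span_union, Submodule.span_union, Submodule.span_eq, RM14,
    Submodule.map_span]

set_option maxRecDepth 4000 in
theorem dotProduct_ξ0_mul_rm16Gen (j k : Fin 7) : (ξ0 * rm16Gen j) ⬝ᵥ rm16Gen k = 0 := by
  revert j k
  decide

set_option maxRecDepth 4000 in
theorem wt_ξ0_mul_rm16Gen_mod_four (j : Fin 7) : wt (ξ0 * rm16Gen j) % 4 = 0 := by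
  revert j
  decide

theorem stmt_14 : ∀ β ∈ RM16, ξ0 * β ∈ dual RM16 ∧ wt (ξ0 * β) % 4 = 0 := by
  rw [RM16_eq_span_range_rm16Gen]
  refine forall_mul_mem_dual_span_of_generators ξ0 ?_
  rintro _ ⟨j, rfl⟩
  exact ⟨mem_dual_span_iff.mpr fun _ ⟨k, hk⟩ => hk ▸ dotProduct_ξ0_mul_rm16Gen j k,
    wt_ξ0_mul_rm16Gen_mod_four j⟩
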